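/- The evaluation map τ ↦ (τ(g₀), τ(g₁), τ(g₂), τ(g₃)) is a bijection from the set of group homomorphisms G → U(1) onto U(1) × U(1) × {±1} × {±1}, where {±1} = {z ∈ U(1) : z² = 1}. -/

import Mathlib

/-- The underlying set of the group `G` is `ℤ⁴`. -/
def G : Type := ℤ × ℤ × ℤ × ℤ

namespace G

/-- Build an element of `G` from four integers. -/
def mk (a b c d : ℤ) : G := (a, b, c, d)

/-- The twisted multiplication
`(a,b,c,d)·(a',b',c',d') = (a+a', b+b', c+(−1)^a·c', d+(−1)^a·d')`. -/
def mul' (x y : G) : G :=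
  mk (x.1 + y.1) (x.2.1 + y.2.1)
    (x.2.2.1 + (x.1.negOnePow : ℤ) * y.2.2.1)
    (x.2.2.2 + (x.1.negOnePow : ℤ) * y.2.2.2)

/-- The inverse `(a,b,c,d)⁻¹ = (−a, −b, −(−1)^a·c, −(−1)^a·d)`. -/
def inv' (x : G) : G :=
  mk (-x.1) (-x.2.1) (-((x.1.negOnePow : ℤ) * x.2.2.1)) (-((x.1.negOnePow : ℤ) * x.2.2.2))

instance instGroup : Group G where
  mul := mul'
  one := mk 0 0 0 0
  inv := inv'
  mul_assoc x y z := by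
    show mul' (mul' x y) z = mul' x (mul' y z)
    obtain ⟨a, b, c, d⟩ := x
    obtain ⟨a', b', c', d'⟩ := y
    obtain ⟨a'', b'', c'', d''⟩ := z
    simp only [mul', mk, Int.negOnePow_add, Units.val_mul]
    exact Prod.ext (by ring) (Prod.ext (by ring) (Prod.ext (by ring) (by ring)))
  one_mul x := by
    show mul' (mk 0 0 0 0) x = x
    obtain ⟨a, b, c, d⟩ := x
    simp [mul', mk]
    rfl
  mul_one x := by
    show mul' x (mk 0 0 0 0) = x
    obtain ⟨a, b, c, d⟩ := x
    simp [mul', mk]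
    rfl
  inv_mul_cancel x := by
    show mul' (inv' x) x = mk 0 0 0 0
    obtain ⟨a, b, c, d⟩ := x
    simp only [mul', inv', mk, Int.negOnePow_neg]
    exact Prod.ext (by ring) (Prod.ext (by ring) (Prod.ext (by ring) (by ring)))

def g₀ : G := mk 1 0 0 0
def g₁ : G := mk 0 1 0 0
def g₂ : G := mk 0 0 1 0
def g₃ : G := mk 0 0 0 1

end G

/-!
Every element factors as `(a,b,c,d) = g₁^b g₂^c g₃^d g₀^a`, so a homomorphism is determined by
its values on the `gᵢ`. Conjugation by `g₀` inverts `g₂` and `g₃`, so in the abelian group `U(1)`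
their images square to `1`. Conversely, for such values `(a,b,c,d) ↦ u^a v^b w^c t^d` is a
homomorphism, because the twist `(−1)^a` in the last two coordinates is invisible to an involution.
-/

lemma zpow_units_mul_of_sq_eq_one {M : Type*} [Group M] {w : M} (hw : w ^ 2 = 1) (u : ℤˣ)
    (n : ℤ) : w ^ ((u : ℤ) * n) = w ^ n := by
  have hinv : w⁻¹ = w := inv_eq_of_mul_eq_one_right (by rw [← sq, hw])
  rcases Int.units_eq_one_or u with rfl | rfl
  · simp
  · simp [zpow_neg, ← inv_zpow, hinv]

lemma MonoidHom.map_sq_eq_one_of_mul_mul_inv_eq_inv {G M : Type*} [Group G] [CommGroup M]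
    (f : G →* M) {g h : G} (hgh : g * h * g⁻¹ = h⁻¹) : f h ^ 2 = 1 := by
  have hinv : f h = (f h)⁻¹ := by
    simpa only [map_mul, map_inv, mul_inv_cancel_comm] using congrArg f hgh
  rw [sq]
  exact mul_eq_one_iff_eq_inv.mpr hinv

namespace G

@[simp] lemma mk_mul_mk (a b c d a' b' c' d' : ℤ) :
    mk a b c d * mk a' b' c' d' =
      mk (a + a') (b + b') (c + (a.negOnePow : ℤ) * c') (d + (a.negOnePow : ℤ) * d') :=
  rfl

@[simp] lemma mk_inv (a b c d : ℤ) :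
    (mk a b c d)⁻¹ = mk (-a) (-b) (-((a.negOnePow : ℤ) * c)) (-((a.negOnePow : ℤ) * d)) :=
  rfl

lemma mk_zero_zpow (b c d n : ℤ) : mk 0 b c d ^ n = mk 0 (n * b) (n * c) (n * d) := by
  induction n using Int.induction_on with
  | zero => simp only [zpow_zero, zero_mul]; rfl
  | succ n ih =>
    rw [zpow_add_one, ih, mk_mul_mk]
    simp only [Int.negOnePow_zero, Units.val_one]
    congr 1 <;> ring
  | pred n ih =>
    rw [zpow_sub_one, ih, mk_inv, mk_mul_mk]
    simp only [Int.negOnePow_zero, Units.val_one]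
    congr 1 <;> ring

lemma g₀_zpow (n : ℤ) : g₀ ^ n = mk n 0 0 0 := by
  induction n using Int.induction_on with
  | zero => rfl
  | succ n ih =>
    rw [zpow_add_one, ih, g₀, mk_mul_mk]
    simp
  | pred n ih =>
    rw [zpow_sub_one, ih, g₀, mk_inv, mk_mul_mk]
    simp [sub_eq_add_neg]

lemma mk_eq_zpow_mul (a b c d : ℤ) : mk a b c d = g₁ ^ b * g₂ ^ c * g₃ ^ d * g₀ ^ a := by
  simp [g₁, g₂, g₃, g₀_zpow, mk_zero_zpow]

lemma hom_ext {M : Type*} [Group M] {τ σ : G →* M} (h₀ : τ g₀ = σ g₀) (h₁ : τ g₁ = σ g₁)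
    (h₂ : τ g₂ = σ g₂) (h₃ : τ g₃ = σ g₃) : τ = σ := by
  ext ⟨a, b, c, d⟩
  change τ (mk a b c d) = σ (mk a b c d)
  simp only [mk_eq_zpow_mul, map_mul, map_zpow, h₀, h₁, h₂, h₃]

lemma g₀_mul_g₂_mul_g₀_inv : g₀ * g₂ * g₀⁻¹ = g₂⁻¹ := rfl

lemma g₀_mul_g₃_mul_g₀_inv : g₀ * g₃ * g₀⁻¹ = g₃⁻¹ := rfl

def lift {M : Type*} [CommGroup M] (u v w t : M) (hw : w ^ 2 = 1) (ht : t ^ 2 = 1) : G →* M where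
  toFun x := u ^ x.1 * v ^ x.2.1 * w ^ x.2.2.1 * t ^ x.2.2.2
  map_one' := by simp [show (1 : G) = mk 0 0 0 0 from rfl, mk]
  map_mul' := by
    rintro ⟨a, b, c, d⟩ ⟨a', b', c', d'⟩
    change u ^ (a + a') * v ^ (b + b') * w ^ (c + (a.negOnePow : ℤ) * c') *
      t ^ (d + (a.negOnePow : ℤ) * d') = _
    rw [zpow_add, zpow_add, zpow_add, zpow_add, zpow_units_mul_of_sq_eq_one hw,
      zpow_units_mul_of_sq_eq_one ht]
    ac_rfl

lemma lift_apply_generators {M : Type*} [CommGroup M] (u v w t : M) (hw : w ^ 2 = 1)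
    (ht : t ^ 2 = 1) :
    (lift u v w t hw ht g₀, lift u v w t hw ht g₁, lift u v w t hw ht g₂, lift u v w t hw ht g₃) =
      (u, v, w, t) := by
  simp [lift, g₀, g₁, g₂, g₃, mk]

end G

open G in
/-- The evaluation map `τ ↦ (τ(g₀), τ(g₁), τ(g₂), τ(g₃))` is a bijection from the set of
group homomorphisms `G → U(1)` onto `U(1) × U(1) × {±1} × {±1}`. -/
theorem G_circle_hom_classification :
    Function.Injective (fun τ : G →* Circle => (τ g₀, τ g₁, τ g₂, τ g₃)) ∧
    Set.range (fun τ : G →* Circle => (τ g₀, τ g₁, τ g₂, τ g₃)) =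
      {p : Circle × Circle × Circle × Circle | p.2.2.1 ^ 2 = 1 ∧ p.2.2.2 ^ 2 = 1} := by
  refine ⟨fun τ σ h => ?_, Set.ext fun p => ⟨?_, ?_⟩⟩
  · simp only [Prod.mk.injEq] at h
    exact hom_ext h.1 h.2.1 h.2.2.1 h.2.2.2
  · rintro ⟨τ, rfl⟩
    exact ⟨τ.map_sq_eq_one_of_mul_mul_inv_eq_inv g₀_mul_g₂_mul_g₀_inv,
      τ.map_sq_eq_one_of_mul_mul_inv_eq_inv g₀_mul_g₃_mul_g₀_inv⟩
  · rintro ⟨hw, ht⟩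
    exact ⟨lift p.1 p.2.1 p.2.2.1 p.2.2.2 hw ht, lift_apply_generators _ _ _ _ hw ht⟩
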